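/- The constraint reduction rules preserve the property of being a deducibility constraint system: if C is a deducibility constraint system and C reduces in one step (by any of rules C1–C5, with associated substitution θ) to C', then C' is a deducibility constraint system. -/

import Mathlib

/-- Dolev-Yao messages with variables. -/
inductive MsgV : Type
  | name : ℕ → MsgV
  | var  : ℕ → MsgV
  | pair : MsgV → MsgV → MsgV
  | enc  : MsgV → MsgV → MsgV
  deriving DecidableEq

open MsgV

/-- Homomorphic extension of a substitution to messages. -/
def substT (θ : ℕ → MsgV) : MsgV → MsgV
  | name a => name a
  | var x => θ x
  | pair m n => pair (substT θ m) (substT θ n)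
  | enc m k => enc (substT θ m) (substT θ k)

/-- Composition of substitutions: `comp θ ρ` applies θ first, then ρ. -/
def comp (θ ρ : ℕ → MsgV) : ℕ → MsgV := fun x => substT ρ (θ x)

/-- Variables occurring in a message. -/
def varsT : MsgV → Finset ℕ
  | name _ => ∅
  | var x => {x}
  | pair m n => varsT m ∪ varsT n
  | enc m k => varsT m ∪ varsT k

/-- Variables occurring in a finite set of messages. -/
def varsS (S : Finset MsgV) : Finset ℕ := S.biUnion varsT

/-- Ground (variable-free) messages. -/
def groundT (m : MsgV) : Prop := varsT m = ∅

/-- Ground substitutions. -/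
def groundSub (θ : ℕ → MsgV) : Prop := ∀ x, groundT (θ x)

/-- The Dolev-Yao sequent calculus (rules id, p_L, p_R, e_L, e_R). -/
inductive SC : Finset MsgV → MsgV → Prop
  | id {Γ M} : M ∈ Γ → SC Γ M
  | pR {Γ M N} : SC Γ M → SC Γ N → SC Γ (pair M N)
  | eR {Γ M K} : SC Γ M → SC Γ K → SC Γ (enc M K)
  | pL {Γ M N T} : pair M N ∈ Γ →
      SC (insert M (insert N Γ)) T → SC Γ T
  | eL {Γ M K T} : enc M K ∈ Γ → SC Γ K →
      SC (insert M (insert K Γ)) T → SC Γ T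

/-- Right-deducibility: derivability using only id, p_R, e_R. -/
inductive SCR : Finset MsgV → MsgV → Prop
  | id {Γ M} : M ∈ Γ → SCR Γ M
  | pR {Γ M N} : SCR Γ M → SCR Γ N → SCR Γ (pair M N)
  | eR {Γ M K} : SCR Γ M → SCR Γ K → SCR Γ (enc M K)

/-- Deducibility constraints: proper (Σ ⊩? M) or right (Σ ⊩_R? M). -/
inductive Constraint : Type
  | proper : Finset MsgV → MsgV → Constraint
  | rightc : Finset MsgV → MsgV → Constraint
  deriving DecidableEq

/-- Left side of a constraint. -/
def Constraint.lhs : Constraint → Finset MsgV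
  | .proper S _ => S
  | .rightc S _ => S

/-- Right side of a constraint. -/
def Constraint.rhs : Constraint → MsgV
  | .proper _ M => M
  | .rightc _ M => M

/-- Applying a substitution to a constraint. -/
def csub (θ : ℕ → MsgV) : Constraint → Constraint
  | .proper S M => .proper (S.image (substT θ)) (substT θ M)
  | .rightc S M => .rightc (S.image (substT θ)) (substT θ M)

/-- A ground substitution satisfies a single constraint. -/
def holds (θ : ℕ → MsgV) : Constraint → Prop
  | .proper S M => SC (S.image (substT θ)) (substT θ M)
  | .rightc S M => SCR (S.image (substT θ)) (substT θ M)

/-- A solution of a list of constraints: a ground substitution satisfying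
every constraint in the list. -/
def Solution (θ : ℕ → MsgV) (C : List Constraint) : Prop :=
  groundSub θ ∧ ∀ c ∈ C, holds θ c

/-- θ unifies M and N. -/
def Unifies (θ : ℕ → MsgV) (M N : MsgV) : Prop := substT θ M = substT θ N

/-- θ is the most general unifier of M and N (variable-conservative, as is
standard: it only moves variables of M and N, within those variables). -/
def IsMGU (θ : ℕ → MsgV) (M N : MsgV) : Prop :=
  Unifies θ M N ∧
  (∀ σ, Unifies σ M N → ∃ ρ, ∀ x, σ x = substT ρ (θ x)) ∧
  (∀ x, θ x ≠ var x → x ∈ varsT M ∪ varsT N ∧ varsT (θ x) ⊆ varsT M ∪ varsT N)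

/-- The identity substitution. -/
def idSub : ℕ → MsgV := fun x => var x

/-- One-step constraint reduction (rules C1–C5), labelled by the associated
substitution. -/
inductive Red : List Constraint → (ℕ → MsgV) → List Constraint → Prop
  | c1 {C₁ C₂ : List Constraint} {S : Finset MsgV} {M N : MsgV} {θ : ℕ → MsgV} :
      (∀ x, M ≠ var x) → N ∈ S → IsMGU θ M N →
      Red (C₁ ++ Constraint.rightc S M :: C₂) θ
          (C₁.map (csub θ) ++ C₂.map (csub θ))
  | c2p {C₁ C₂ : List Constraint} {S : Finset MsgV} {M N : MsgV} :
      Red (C₁ ++ Constraint.rightc S (pair M N) :: C₂) idSub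
          (C₁ ++ Constraint.rightc S M :: Constraint.rightc S N :: C₂)
  | c2e {C₁ C₂ : List Constraint} {S : Finset MsgV} {M N : MsgV} :
      Red (C₁ ++ Constraint.rightc S (enc M N) :: C₂) idSub
          (C₁ ++ Constraint.rightc S M :: Constraint.rightc S N :: C₂)
  | c3 {C₁ C₂ : List Constraint} {S : Finset MsgV} {M : MsgV} :
      Red (C₁ ++ Constraint.proper S M :: C₂) idSub
          (C₁ ++ Constraint.rightc S M :: C₂)
  | c4 {C₁ C₂ : List Constraint} {S : Finset MsgV} {M N U : MsgV} :
      pair M N ∉ S →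
      Red (C₁ ++ Constraint.proper (insert (pair M N) S) U :: C₂) idSub
          (C₁ ++ Constraint.proper (insert M (insert N S)) U :: C₂)
  | c5 {C₁ C₂ : List Constraint} {S : Finset MsgV} {M N U : MsgV} :
      enc M N ∉ S →
      Red (C₁ ++ Constraint.proper (insert (enc M N) S) U :: C₂) idSub
          (C₁ ++ Constraint.rightc (insert (enc M N) S) N ::
                Constraint.proper (insert M (insert N S)) U :: C₂)

/-- Multi-step constraint reduction, accumulating the composed substitution. -/
inductive RedStar : List Constraint → (ℕ → MsgV) → List Constraint → Prop
  | refl (C) : RedStar C idSub C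
  | step {C θ C' σ C''} : Red C θ C' → RedStar C' σ C'' →
      RedStar C (comp θ σ) C''

/-- Solved form: every constraint is Σ ⊩_R? x with x a variable. -/
def Solved (C : List Constraint) : Prop :=
  ∀ c ∈ C, ∃ (S : Finset MsgV) (x : ℕ), c = Constraint.rightc S (var x)

/-- The i-th constraint of a list (with a default). -/
def nth (C : List Constraint) (i : ℕ) : Constraint :=
  C.getD i (Constraint.proper ∅ (name 0))

/-- Deducibility constraint systems (Definition 6.5 of the paper):
(1) for i < j and every solution θ of the prefix before position j, the
θ-instance of the part of the j-th left side whose variables all occur in the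
i-th left side deduces the θ-instance of every member of the i-th left side;
(2) every variable first occurs on the right side of a constraint whose left
side does not contain it. -/
def DCSystem (C : List Constraint) : Prop :=
  (∀ i j, i < j → j < C.length →
      ∀ θ, Solution θ (C.take j) →
        ∀ N ∈ (nth C i).lhs,
          SC ((((nth C j).lhs).filter
                (fun m => varsT m ⊆ varsS ((nth C i).lhs))).image (substT θ))
             (substT θ N)) ∧
  (∀ x, (∃ c ∈ C, x ∈ varsT c.rhs ∪ varsS c.lhs) →
      ∃ i, i < C.length ∧ x ∈ varsT ((nth C i).rhs) ∧
           x ∉ varsS ((nth C i).lhs) ∧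
           ∀ j < i, x ∉ varsT ((nth C j).rhs) ∪ varsS ((nth C j).lhs))

/-!
Condition (2) is equivalent to: every variable of a left side already occurs in an earlier
constraint. In this form both conditions only look at left sides and at prefixes
of the system, and both survive applying a substitution to the whole system, because they are
monotone in the variables and deductions can be instantiated.

Each rule is then a composite of three local moves. Rule C1 applies the unifier `θ` everywhere and
deletes the constraint `Sθ ⊩_R Mθ`, which every ground substitution satisfies since
`Mθ = Nθ ∈ Sθ` and which introduces no variable. Rules C3 and C4 replace one constraint by another
one whose left side is interderivable with the old one in the context of the earlier constraints;
the transfer of condition (1) then rests on cut admissibility of the Dolev-Yao calculus. Rules C2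
and C5 first insert a constraint with the same left side as the reduced one and then replace the
reduced one.
-/

theorem substT_comp (θ σ : ℕ → MsgV) (m : MsgV) :
    substT (comp θ σ) m = substT σ (substT θ m) := by
  induction m <;> simp_all [substT, comp]

theorem varsT_substT (θ : ℕ → MsgV) (m : MsgV) :
    varsT (substT θ m) = (varsT m).biUnion fun y => varsT (θ y) := by
  induction m <;> simp_all [substT, varsT, Finset.union_biUnion]

theorem varsS_image (θ : ℕ → MsgV) (S : Finset MsgV) :
    varsS (S.image (substT θ)) = (varsS S).biUnion fun y => varsT (θ y) := by
  simp only [varsS, Finset.image_biUnion, varsT_substT, Finset.biUnion_biUnion]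

theorem varsS_insert (m : MsgV) (S : Finset MsgV) :
    varsS (insert m S) = varsT m ∪ varsS S :=
  Finset.biUnion_insert

theorem varsT_subset_varsS {m : MsgV} {S : Finset MsgV} (h : m ∈ S) : varsT m ⊆ varsS S :=
  Finset.subset_biUnion_of_mem _ h

theorem groundSub_comp (θ : ℕ → MsgV) {σ : ℕ → MsgV} (hσ : groundSub σ) :
    groundSub (comp θ σ) := by
  intro x
  simp only [groundT, comp, varsT_substT]
  exact Finset.eq_empty_of_forall_notMem fun z hz => by
    obtain ⟨y, -, hzy⟩ := Finset.mem_biUnion.1 hz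
    exact Finset.notMem_empty z ((hσ y : varsT (σ y) = ∅) ▸ hzy)

theorem image_substT_comp (θ σ : ℕ → MsgV) (S : Finset MsgV) :
    S.image (substT (comp θ σ)) = (S.image (substT θ)).image (substT σ) := by
  simp only [Finset.image_image, Function.comp_def, ← substT_comp]

theorem holds_csub (θ σ : ℕ → MsgV) (c : Constraint) :
    holds σ (csub θ c) ↔ holds (comp θ σ) c := by
  cases c <;> simp [holds, csub, image_substT_comp, substT_comp]

theorem lhs_csub (θ : ℕ → MsgV) (c : Constraint) :
    (csub θ c).lhs = c.lhs.image (substT θ) := by cases c <;> rfl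

theorem rhs_csub (θ : ℕ → MsgV) (c : Constraint) :
    (csub θ c).rhs = substT θ c.rhs := by cases c <;> rfl

def Constraint.vars (c : Constraint) : Finset ℕ := varsT c.rhs ∪ varsS c.lhs

theorem vars_csub (θ : ℕ → MsgV) (c : Constraint) :
    (csub θ c).vars = c.vars.biUnion fun y => varsT (θ y) := by
  simp only [Constraint.vars, lhs_csub, rhs_csub, varsT_substT, varsS_image,
    Finset.union_biUnion]

def varsL (C : List Constraint) : Finset ℕ := C.toFinset.biUnion Constraint.vars

theorem mem_varsL {x : ℕ} {C : List Constraint} : x ∈ varsL C ↔ ∃ c ∈ C, x ∈ c.vars := by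
  simp [varsL]

theorem varsL_append (C D : List Constraint) : varsL (C ++ D) = varsL C ∪ varsL D := by
  simp [varsL, List.toFinset_append, Finset.union_biUnion]

theorem varsL_cons (c : Constraint) (C : List Constraint) :
    varsL (c :: C) = c.vars ∪ varsL C := by
  simp [varsL]

theorem varsL_map_csub (θ : ℕ → MsgV) (C : List Constraint) :
    varsL (C.map (csub θ)) = (varsL C).biUnion fun y => varsT (θ y) := by
  ext x
  simp only [mem_varsL, List.mem_map, Finset.mem_biUnion]
  constructor
  · rintro ⟨_, ⟨c, hc, rfl⟩, hx⟩
    obtain ⟨y, hy, hxy⟩ := Finset.mem_biUnion.1 (vars_csub θ c ▸ hx)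
    exact ⟨y, ⟨c, hc, hy⟩, hxy⟩
  · rintro ⟨y, ⟨c, hc, hy⟩, hxy⟩
    exact ⟨csub θ c, ⟨c, hc, rfl⟩, vars_csub θ c ▸ Finset.mem_biUnion.2 ⟨y, hy, hxy⟩⟩

theorem SC.mono {Γ Γ' : Finset MsgV} {T : MsgV} (h : SC Γ T) (hΓ : Γ ⊆ Γ') : SC Γ' T := by
  induction h generalizing Γ' with
  | id hm => exact SC.id (hΓ hm)
  | pR _ _ ih₁ ih₂ => exact SC.pR (ih₁ hΓ) (ih₂ hΓ)
  | eR _ _ ih₁ ih₂ => exact SC.eR (ih₁ hΓ) (ih₂ hΓ)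
  | pL hm _ ih => exact SC.pL (hΓ hm) (ih (by gcongr))
  | eL hm _ _ ihK ih => exact SC.eL (hΓ hm) (ihK hΓ) (ih (by gcongr))

theorem SC.of_SCR {Γ : Finset MsgV} {T : MsgV} (h : SCR Γ T) : SC Γ T := by
  induction h with
  | id hm => exact SC.id hm
  | pR _ _ ih₁ ih₂ => exact SC.pR ih₁ ih₂
  | eR _ _ ih₁ ih₂ => exact SC.eR ih₁ ih₂

theorem SC.pair_inv {Γ : Finset MsgV} {M N : MsgV} (h : SC Γ (pair M N)) :
    SC Γ M ∧ SC Γ N := by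
  generalize hT : pair M N = T at h
  induction h with
  | id hm =>
    subst hT
    exact ⟨SC.pL hm (SC.id (by simp)), SC.pL hm (SC.id (by simp))⟩
  | pR h₁ h₂ => cases hT; exact ⟨h₁, h₂⟩
  | eR => cases hT
  | pL hm _ ih => exact (ih hT).imp (SC.pL hm) (SC.pL hm)
  | eL hm hK _ _ ih => exact (ih hT).imp (SC.eL hm hK) (SC.eL hm hK)

theorem SC.dec {Γ : Finset MsgV} {M K : MsgV} (h : SC Γ (enc M K)) (hK : SC Γ K) : SC Γ M := by
  generalize hT : enc M K = T at h
  have hsub (A B : MsgV) (Δ : Finset MsgV) : Δ ⊆ insert A (insert B Δ) :=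
    (Finset.subset_insert _ _).trans (Finset.subset_insert _ _)
  induction h with
  | id hm => subst hT; exact SC.eL hm hK (SC.id (by simp))
  | pR => cases hT
  | eR h₁ => cases hT; exact h₁
  | pL hm _ ih => exact SC.pL hm (ih (hK.mono (hsub _ _ _)) hT)
  | eL hm hK' _ _ ih => exact SC.eL hm hK' (ih (hK.mono (hsub _ _ _)) hT)

/-- Natural-deduction presentation of Dolev-Yao deducibility: its context never changes, so it is
trivially closed under cut, and it derives the same messages as `SC`. -/
inductive ND (Γ : Finset MsgV) : MsgV → Prop
  | ax {M} : M ∈ Γ → ND Γ M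
  | pI {M N} : ND Γ M → ND Γ N → ND Γ (pair M N)
  | eI {M K} : ND Γ M → ND Γ K → ND Γ (enc M K)
  | pE₁ {M N} : ND Γ (pair M N) → ND Γ M
  | pE₂ {M N} : ND Γ (pair M N) → ND Γ N
  | dec {M K} : ND Γ (enc M K) → ND Γ K → ND Γ M

theorem ND.cut {Δ Γ : Finset MsgV} {T : MsgV} (h : ND Δ T) (hΔ : ∀ A ∈ Δ, ND Γ A) : ND Γ T := by
  induction h with
  | ax hm => exact hΔ _ hm
  | pI _ _ ih₁ ih₂ => exact ND.pI ih₁ ih₂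
  | eI _ _ ih₁ ih₂ => exact ND.eI ih₁ ih₂
  | pE₁ _ ih => exact ND.pE₁ ih
  | pE₂ _ ih => exact ND.pE₂ ih
  | dec _ _ ih₁ ih₂ => exact ND.dec ih₁ ih₂

theorem ND.toSC {Γ : Finset MsgV} {T : MsgV} (h : ND Γ T) : SC Γ T := by
  induction h with
  | ax hm => exact SC.id hm
  | pI _ _ ih₁ ih₂ => exact SC.pR ih₁ ih₂
  | eI _ _ ih₁ ih₂ => exact SC.eR ih₁ ih₂
  | pE₁ _ ih => exact ih.pair_inv.1
  | pE₂ _ ih => exact ih.pair_inv.2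
  | dec _ _ ih₁ ih₂ => exact ih₁.dec ih₂

theorem SC.toND {Γ : Finset MsgV} {T : MsgV} (h : SC Γ T) : ND Γ T := by
  induction h with
  | id hm => exact ND.ax hm
  | pR _ _ ih₁ ih₂ => exact ND.pI ih₁ ih₂
  | eR _ _ ih₁ ih₂ => exact ND.eI ih₁ ih₂
  | pL hm _ ih =>
    refine ih.cut fun A hA => ?_
    rcases Finset.mem_insert.1 hA with rfl | hA
    · exact ND.pE₁ (ND.ax hm)
    rcases Finset.mem_insert.1 hA with rfl | hA
    · exact ND.pE₂ (ND.ax hm)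
    · exact ND.ax hA
  | eL hm _ _ ihK ih =>
    refine ih.cut fun A hA => ?_
    rcases Finset.mem_insert.1 hA with rfl | hA
    · exact ND.dec (ND.ax hm) ihK
    rcases Finset.mem_insert.1 hA with rfl | hA
    · exact ihK
    · exact ND.ax hA

theorem SC.cut {Δ Γ : Finset MsgV} {T : MsgV} (h : SC Δ T) (hΔ : ∀ A ∈ Δ, SC Γ A) : SC Γ T :=
  (h.toND.cut fun A hA => (hΔ A hA).toND).toSC

theorem SCR.image_substT {T : Finset MsgV} {B : MsgV} (σ : ℕ → MsgV) (h : SCR T B) :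
    SCR (T.image (substT σ)) (substT σ B) := by
  induction h with
  | id hm => exact SCR.id (Finset.mem_image_of_mem _ hm)
  | pR _ _ ih₁ ih₂ => exact SCR.pR ih₁ ih₂
  | eR _ _ ih₁ ih₂ => exact SCR.eR ih₁ ih₂

theorem SCR.filter_vars {T : Finset MsgV} {B : MsgV} {V : Finset ℕ} (h : SCR T B)
    (hB : varsT B ⊆ V) : SCR (T.filter fun m => varsT m ⊆ V) B := by
  induction h with
  | id hm => exact SCR.id (Finset.mem_filter.2 ⟨hm, hB⟩)
  | pR _ _ ih₁ ih₂ =>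
    exact SCR.pR (ih₁ (subset_trans Finset.subset_union_left hB))
      (ih₂ (subset_trans Finset.subset_union_right hB))
  | eR _ _ ih₁ ih₂ =>
    exact SCR.eR (ih₁ (subset_trans Finset.subset_union_left hB))
      (ih₂ (subset_trans Finset.subset_union_right hB))

theorem nth_append_of_lt {P R : List Constraint} {i : ℕ} (h : i < P.length) :
    nth (P ++ R) i = nth P i :=
  List.getD_append _ _ _ _ h

theorem nth_append_add (P R : List Constraint) (n : ℕ) : nth (P ++ R) (P.length + n) = nth R n := by
  rw [nth, List.getD_append_right _ _ _ _ (Nat.le_add_right _ _), Nat.add_sub_cancel_left]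
  rfl

theorem nth_map (θ : ℕ → MsgV) {C : List Constraint} {i : ℕ} (h : i < C.length) :
    nth (C.map (csub θ)) i = csub θ (nth C i) := by
  rw [nth, nth, List.getD_eq_getElem _ _ (by simpa using h), List.getElem_map,
    List.getD_eq_getElem _ _ h]

theorem mem_take_iff_nth {C : List Constraint} {c : Constraint} {n : ℕ} :
    c ∈ C.take n ↔ ∃ m < n, m < C.length ∧ nth C m = c := by
  simp only [List.mem_iff_getElem, List.getElem_take, List.length_take, lt_min_iff, nth]
  constructor
  · rintro ⟨m, ⟨hmn, hm⟩, rfl⟩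
    exact ⟨m, hmn, hm, List.getD_eq_getElem _ _ hm⟩
  · rintro ⟨m, hmn, hm, rfl⟩
    exact ⟨m, ⟨hmn, hm⟩, (List.getD_eq_getElem _ _ hm).symm⟩

theorem mem_iff_nth {C : List Constraint} {c : Constraint} :
    c ∈ C ↔ ∃ m < C.length, nth C m = c := by
  simpa using mem_take_iff_nth (C := C) (c := c) (n := C.length)

theorem varsL_mono {C D : List Constraint} (h : C ⊆ D) : varsL C ⊆ varsL D := by
  intro x hx
  obtain ⟨c, hc, hxc⟩ := mem_varsL.1 hx
  exact mem_varsL.2 ⟨c, h hc, hxc⟩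

theorem Solution.mono {σ : ℕ → MsgV} {C D : List Constraint} (h : Solution σ D) (hCD : C ⊆ D) :
    Solution σ C :=
  ⟨h.1, fun c hc => h.2 c (hCD hc)⟩

theorem nth_append_cons_length (P Q : List Constraint) (d : Constraint) :
    nth (P ++ d :: Q) P.length = d :=
  nth_append_add P (d :: Q) 0

theorem nth_append_cons_of_ne {P Q : List Constraint} {i : ℕ} (hi : i ≠ P.length)
    (d d' : Constraint) : nth (P ++ d :: Q) i = nth (P ++ d' :: Q) i := by
  rcases lt_or_gt_of_ne hi with hi | hi
  · rw [nth_append_of_lt hi, nth_append_of_lt hi]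
  · obtain ⟨n, rfl⟩ := Nat.exists_eq_add_of_lt hi
    rw [Nat.add_assoc, nth_append_add, nth_append_add]
    rfl

theorem take_append_cons_add (P Q : List Constraint) (d : Constraint) (n : ℕ) :
    (P ++ d :: Q).take (P.length + n + 1) = P ++ d :: Q.take n := by
  rw [Nat.add_assoc, List.take_length_add_append]
  rfl

theorem solution_append {σ : ℕ → MsgV} {C D : List Constraint} :
    Solution σ (C ++ D) ↔ Solution σ C ∧ Solution σ D := by
  simp only [Solution, List.mem_append, or_imp, forall_and]
  tauto

theorem solution_append_cons {σ : ℕ → MsgV} {P R : List Constraint} {c : Constraint} :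
    Solution σ (P ++ c :: R) ↔ Solution σ P ∧ holds σ c ∧ Solution σ R := by
  simp only [Solution, List.mem_append, List.mem_cons, or_imp, forall_and, forall_eq]
  tauto

/-- `Σⱼ^{dv}σ ⊢ Nσ` for all `N ∈ Σᵢ`, with `T = Σⱼ` and `S = Σᵢ`. -/
def Deduces (σ : ℕ → MsgV) (T S : Finset MsgV) : Prop :=
  ∀ N ∈ S, SC ((T.filter fun m => varsT m ⊆ varsS S).image (substT σ)) (substT σ N)

def KnowledgeMonotone (C : List Constraint) : Prop :=
  ∀ i j, i < j → j < C.length → ∀ σ, Solution σ (C.take j) → Deduces σ (nth C j).lhs (nth C i).lhs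

def Origination (C : List Constraint) : Prop :=
  ∀ i < C.length, varsS (nth C i).lhs ⊆ varsL (C.take i)

theorem dcSystem_iff (C : List Constraint) :
    DCSystem C ↔ KnowledgeMonotone C ∧ Origination C := by
  refine and_congr Iff.rfl ⟨fun h i hi x hx => ?_, fun h x hocc => ?_⟩
  · obtain ⟨f, hf, hfr, hfl, hfirst⟩ :=
      h x ⟨nth C i, mem_iff_nth.2 ⟨i, hi, rfl⟩, Finset.mem_union_right _ hx⟩
    have hfi : f < i := by
      rcases lt_trichotomy f i with hfi | rfl | hif
      · exact hfi
      · exact absurd hx hfl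
      · exact absurd (Finset.mem_union_right _ hx) (hfirst i hif)
    exact mem_varsL.2 ⟨nth C f, mem_take_iff_nth.2 ⟨f, hfi, hf, rfl⟩, Finset.mem_union_left _ hfr⟩
  · classical
    have hex : ∃ n, n < C.length ∧ x ∈ (nth C n).vars := by
      obtain ⟨c, hc, hx⟩ := hocc
      obtain ⟨n, hn, rfl⟩ := mem_iff_nth.1 hc
      exact ⟨n, hn, hx⟩
    obtain ⟨hn, hx⟩ := Nat.find_spec hex
    have hearlier : ∀ j < Nat.find hex, x ∉ (nth C j).vars := fun j hj hxj =>
      Nat.find_min hex hj ⟨by omega, hxj⟩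
    have hlhs : x ∉ varsS (nth C (Nat.find hex)).lhs := fun hxl => by
      obtain ⟨c, hc, hxc⟩ := mem_varsL.1 (h _ hn hxl)
      obtain ⟨j, hj, -, rfl⟩ := mem_take_iff_nth.1 hc
      exact hearlier j hj hxc
    refine ⟨Nat.find hex, hn, ?_, hlhs, hearlier⟩
    exact (Finset.mem_union.1 hx).resolve_right hlhs

theorem deduces_self (σ : ℕ → MsgV) (S : Finset MsgV) : Deduces σ S S := fun _ hN =>
  SC.id (Finset.mem_image_of_mem _ (Finset.mem_filter.2 ⟨hN, varsT_subset_varsS hN⟩))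

theorem Deduces.image_substT {θ σ : ℕ → MsgV} {T S : Finset MsgV} (h : Deduces (comp θ σ) T S) :
    Deduces σ (T.image (substT θ)) (S.image (substT θ)) := by
  intro _ hθN
  obtain ⟨N, hN, rfl⟩ := Finset.mem_image.1 hθN
  rw [← substT_comp]
  refine (h N hN).mono fun _ hσB => ?_
  obtain ⟨B, hB, rfl⟩ := Finset.mem_image.1 hσB
  rw [Finset.mem_filter] at hB
  refine Finset.mem_image.2
    ⟨substT θ B, Finset.mem_filter.2 ⟨Finset.mem_image_of_mem _ hB.1, ?_⟩, (substT_comp θ σ B).symm⟩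
  rw [varsT_substT, varsS_image]
  exact Finset.biUnion_subset_biUnion_of_subset_left _ hB.2

theorem Deduces.of_forall_SCR {σ : ℕ → MsgV} {T T' S : Finset MsgV} (h : Deduces σ T S)
    (hT : ∀ B ∈ T, SCR T' B) : Deduces σ T' S := fun N hN =>
  (h N hN).cut fun _ hσB => by
    obtain ⟨B, hB, rfl⟩ := Finset.mem_image.1 hσB
    rw [Finset.mem_filter] at hB
    exact SC.of_SCR (((hT B hB.1).filter_vars hB.2).image_substT σ)

theorem Deduces.of_forall_SC {σ : ℕ → MsgV} {T S S' : Finset MsgV} (h : Deduces σ T S)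
    (hS : ∀ B ∈ S', SC (S.image (substT σ)) (substT σ B)) (hvars : varsS S' = varsS S) :
    Deduces σ T S' := fun B hB =>
  (hS B hB).cut fun _ hσA => by
    obtain ⟨A, hA, rfl⟩ := Finset.mem_image.1 hσA
    exact hvars ▸ h A hA

theorem KnowledgeMonotone.map_csub {C : List Constraint} (h : KnowledgeMonotone C)
    (θ : ℕ → MsgV) : KnowledgeMonotone (C.map (csub θ)) := by
  intro i j hij hj σ hσ
  rw [List.length_map] at hj
  rw [nth_map θ (hij.trans hj), nth_map θ hj, lhs_csub, lhs_csub]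
  refine (h i j hij hj (comp θ σ) ⟨groundSub_comp θ hσ.1, fun c hc => ?_⟩).image_substT
  exact (holds_csub θ σ c).1 (hσ.2 _ (List.map_take ▸ List.mem_map_of_mem hc))

theorem Origination.map_csub {C : List Constraint} (h : Origination C) (θ : ℕ → MsgV) :
    Origination (C.map (csub θ)) := by
  intro i hi
  rw [List.length_map] at hi
  rw [nth_map θ hi, lhs_csub, varsS_image, ← List.map_take, varsL_map_csub]
  exact Finset.biUnion_subset_biUnion_of_subset_left _ (h i hi)

theorem KnowledgeMonotone.of_reindex {O L : List Constraint} (hO : KnowledgeMonotone O)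
    (f : ℕ → ℕ) (hlen : ∀ j < L.length, f j < O.length)
    (hlhs : ∀ i < L.length, (nth L i).lhs = (nth O (f i)).lhs)
    (hmono : ∀ i j, i < j → j < L.length → f i < f j ∨ (nth L i).lhs = (nth L j).lhs)
    (hsol : ∀ σ, ∀ j < L.length, Solution σ (L.take j) → Solution σ (O.take (f j))) :
    KnowledgeMonotone L := by
  intro i j hij hj σ hσ
  rcases hmono i j hij hj with hf | heq
  · rw [hlhs i (hij.trans hj), hlhs j hj]
    exact hO _ _ hf (hlen j hj) σ (hsol σ j hj hσ)
  · rw [heq]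
    exact deduces_self σ _

theorem Origination.of_reindex {O L : List Constraint} (hO : Origination O)
    (f : ℕ → ℕ) (hlen : ∀ j < L.length, f j < O.length)
    (hlhs : ∀ i < L.length, (nth L i).lhs = (nth O (f i)).lhs)
    (hvars : ∀ i < L.length, varsL (O.take (f i)) ⊆ varsL (L.take i)) :
    Origination L := fun i hi =>
  hlhs i hi ▸ (hO _ (hlen i hi)).trans (hvars i hi)

theorem DCSystem.map_csub {C : List Constraint} (h : DCSystem C) (θ : ℕ → MsgV) :
    DCSystem (C.map (csub θ)) := by
  rw [dcSystem_iff] at h ⊢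
  exact ⟨h.1.map_csub θ, h.2.map_csub θ⟩

theorem DCSystem.erase {P Q : List Constraint} {d : Constraint} (h : DCSystem (P ++ d :: Q))
    (hd : ∀ σ, groundSub σ → holds σ d) (hrhs : varsT d.rhs ⊆ varsS d.lhs) :
    DCSystem (P ++ Q) := by
  rw [dcSystem_iff] at h ⊢
  obtain ⟨hmon, horig⟩ := h
  let f : ℕ → ℕ := fun i => if i < P.length then i else i + 1
  have hcases : ∀ i, i < P.length ∨ ∃ n, i = P.length + n := fun i =>
    (lt_or_ge i P.length).imp_right Nat.exists_eq_add_of_le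
  have hnth : ∀ i, nth (P ++ Q) i = nth (P ++ d :: Q) (f i) := by
    intro i
    rcases hcases i with hi | ⟨n, rfl⟩
    · simp only [f, if_pos hi, nth_append_of_lt hi]
    · simp only [f, if_neg (Nat.not_lt.2 (Nat.le_add_right _ n)), Nat.add_assoc, nth_append_add]
      rfl
  have htake : ∀ j, (P ++ d :: Q).take (f j) = (P ++ Q).take j ∨
      ∃ n, (P ++ Q).take j = P ++ Q.take n ∧ (P ++ d :: Q).take (f j) = P ++ d :: Q.take n := by
    intro j
    rcases hcases j with hj | ⟨n, rfl⟩
    · left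
      simp only [f, if_pos hj, List.take_append_of_le_length hj.le]
    · right
      refine ⟨n, List.take_length_add_append n, ?_⟩
      simp only [f, if_neg (Nat.not_lt.2 (Nat.le_add_right _ n)), take_append_cons_add]
  have hlen : ∀ j < (P ++ Q).length, f j < (P ++ d :: Q).length := fun j hj => by
    simp only [f, List.length_append, List.length_cons] at hj ⊢
    split_ifs <;> omega
  have hlhs : ∀ i < (P ++ Q).length, (nth (P ++ Q) i).lhs = (nth (P ++ d :: Q) (f i)).lhs :=
    fun i _ => by rw [hnth]
  refine ⟨hmon.of_reindex f hlen hlhs (fun i j hij _ => ?_) (fun σ j _ hσ => ?_),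
    horig.of_reindex f hlen hlhs (fun i _ => ?_)⟩
  · left
    simp only [f]
    split_ifs <;> omega
  · rcases htake j with heq | ⟨n, hL, hO⟩
    · rwa [heq]
    · rw [hL, solution_append] at hσ
      rw [hO, solution_append_cons]
      exact ⟨hσ.1, hd σ hσ.1.1, hσ.2⟩
  · rcases htake i with heq | ⟨n, hL, hO⟩
    · rw [heq]
    · have hlhsP : varsS d.lhs ⊆ varsL P := by
        simpa only [nth_append_cons_length, List.take_append_length] using
          horig P.length (by simp)
      have hdP : d.vars ⊆ varsL P := Finset.union_subset (hrhs.trans hlhsP) hlhsP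
      rw [hL, hO, varsL_append, varsL_append, varsL_cons]
      exact Finset.union_subset Finset.subset_union_left
        (Finset.union_subset (hdP.trans Finset.subset_union_left) Finset.subset_union_right)

theorem DCSystem.insert_of_lhs_eq {P Q : List Constraint} {d : Constraint}
    (h : DCSystem (P ++ d :: Q)) {e : Constraint} (he : e.lhs = d.lhs) :
    DCSystem (P ++ e :: d :: Q) := by
  rw [dcSystem_iff] at h ⊢
  obtain ⟨hmon, horig⟩ := h
  let f : ℕ → ℕ := fun i => if i ≤ P.length then i else i - 1
  have hf : ∀ n, f (P.length + n + 1) = P.length + n := fun n => by simp [f]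
  have hlhsAt : ∀ i, (nth (P ++ e :: d :: Q) i).lhs = (nth (P ++ d :: Q) (f i)).lhs := by
    intro i
    rcases lt_trichotomy i P.length with hi | rfl | hi
    · simp only [f, if_pos hi.le, nth_append_of_lt hi]
    · simp only [f, le_refl, if_true, nth_append_cons_length, he]
    · obtain ⟨n, rfl⟩ := Nat.exists_eq_add_of_lt hi
      rw [hf, Nat.add_assoc, nth_append_add, nth_append_add]
      rfl
  have htake : ∀ j, (P ++ d :: Q).take (f j) ⊆ (P ++ e :: d :: Q).take j := by
    intro j
    rcases le_or_gt j P.length with hj | hj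
    · simp only [f, if_pos hj, List.take_append_of_le_length hj, List.Subset.refl]
    · obtain ⟨n, rfl⟩ := Nat.exists_eq_add_of_lt hj
      rw [hf, List.take_length_add_append, Nat.add_assoc, List.take_length_add_append]
      exact ((List.sublist_cons_self e _).append_left P).subset
  have hlen : ∀ j < (P ++ e :: d :: Q).length, f j < (P ++ d :: Q).length := fun j hj => by
    simp only [f, List.length_append, List.length_cons] at hj ⊢
    split_ifs <;> omega
  refine ⟨hmon.of_reindex f hlen (fun i _ => hlhsAt i) (fun i j hij _ => ?_)
      (fun σ j _ hσ => hσ.mono (htake j)),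
    horig.of_reindex f hlen (fun i _ => hlhsAt i) (fun i _ => varsL_mono (htake i))⟩
  by_cases hf : f i < f j
  · exact Or.inl hf
  · right
    obtain ⟨rfl, rfl⟩ : i = P.length ∧ j = P.length + 1 := by
      simp only [f] at hf
      split_ifs at hf <;> omega
    rw [nth_append_cons_length, he, nth_append_add]
    rfl

section Replace

variable {P Q : List Constraint} {d d' : Constraint}

theorem KnowledgeMonotone.replace (h : KnowledgeMonotone (P ++ d :: Q))
    (hholds : ∀ σ, Solution σ P → holds σ d' → holds σ d)
    (hnew : ∀ σ, Solution σ P → ∀ B ∈ d'.lhs, SC (d.lhs.image (substT σ)) (substT σ B))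
    (hold : ∀ B ∈ d.lhs, SCR d'.lhs B) (hlhs : varsS d'.lhs = varsS d.lhs) :
    KnowledgeMonotone (P ++ d' :: Q) := by
  intro i j hij hj σ hσ
  have hlen : j < (P ++ d :: Q).length := by simpa using hj
  obtain ⟨hσO, hσP⟩ : Solution σ ((P ++ d :: Q).take j) ∧ (P.length < j → Solution σ P) := by
    rcases le_or_gt j P.length with hjP | hjP
    · rw [List.take_append_of_le_length hjP] at hσ ⊢
      exact ⟨hσ, fun h => absurd h (Nat.not_lt.2 hjP)⟩
    · obtain ⟨n, rfl⟩ := Nat.exists_eq_add_of_lt hjP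
      rw [take_append_cons_add] at hσ ⊢
      obtain ⟨hP, hd', hQ⟩ := solution_append_cons.1 hσ
      exact ⟨solution_append_cons.2 ⟨hP, hholds σ hP hd', hQ⟩, fun _ => hP⟩
  rcases eq_or_ne i P.length with rfl | hi
  · have hold := h _ j hij hlen σ hσO
    rw [nth_append_cons_length, nth_append_cons_of_ne hij.ne' d d'] at hold
    rw [nth_append_cons_length]
    exact hold.of_forall_SC (hnew σ (hσP hij)) hlhs
  rw [← nth_append_cons_of_ne hi d d']
  rcases eq_or_ne j P.length with rfl | hj'
  · have hold' := h i _ hij hlen σ hσO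
    rw [nth_append_cons_length] at hold' ⊢
    exact hold'.of_forall_SCR hold
  · rw [← nth_append_cons_of_ne hj' d d']
    exact h i j hij hlen σ hσO

theorem Origination.replace (h : Origination (P ++ d :: Q)) (hlhs : varsS d'.lhs = varsS d.lhs)
    (hrhs : varsT d.rhs ⊆ varsL P ∪ d'.vars) : Origination (P ++ d' :: Q) := by
  have hvars : d.vars ⊆ varsL P ∪ d'.vars := by
    refine Finset.union_subset hrhs (Finset.Subset.trans ?_ Finset.subset_union_right)
    rw [← hlhs]
    exact Finset.subset_union_right
  have htake : ∀ i, varsL ((P ++ d :: Q).take i) ⊆ varsL ((P ++ d' :: Q).take i) := by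
    intro i
    rcases le_or_gt i P.length with hi | hi
    · rw [List.take_append_of_le_length hi, List.take_append_of_le_length hi]
    · obtain ⟨n, rfl⟩ := Nat.exists_eq_add_of_lt hi
      rw [take_append_cons_add, take_append_cons_add, varsL_append, varsL_append, varsL_cons,
        varsL_cons]
      exact Finset.union_subset Finset.subset_union_left (Finset.union_subset
        (hvars.trans (Finset.union_subset_union_right Finset.subset_union_left))
        (Finset.subset_union_right.trans Finset.subset_union_right))
  intro i hi
  have hlen : i < (P ++ d :: Q).length := by simpa using hi
  rcases eq_or_ne i P.length with rfl | hi'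
  · have := h _ hlen
    rw [nth_append_cons_length] at this ⊢
    exact hlhs ▸ this.trans (htake _)
  · rw [← nth_append_cons_of_ne hi' d d']
    exact (h i hlen).trans (htake i)

theorem DCSystem.replace (h : DCSystem (P ++ d :: Q))
    (hholds : ∀ σ, Solution σ P → holds σ d' → holds σ d)
    (hnew : ∀ σ, Solution σ P → ∀ B ∈ d'.lhs, SC (d.lhs.image (substT σ)) (substT σ B))
    (hold : ∀ B ∈ d.lhs, SCR d'.lhs B) (hlhs : varsS d'.lhs = varsS d.lhs)
    (hrhs : varsT d.rhs ⊆ varsL P ∪ d'.vars) : DCSystem (P ++ d' :: Q) := by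
  rw [dcSystem_iff] at h ⊢
  exact ⟨h.1.replace hholds hnew hold hlhs, h.2.replace hlhs hrhs⟩

end Replace

section Rules

variable {C₁ C₂ : List Constraint} {S : Finset MsgV}

theorem DCSystem.unify {M N : MsgV} {θ : ℕ → MsgV} (h : DCSystem (C₁ ++ .rightc S M :: C₂))
    (hN : N ∈ S) (hθ : Unifies θ M N) : DCSystem (C₁.map (csub θ) ++ C₂.map (csub θ)) := by
  have hθN : substT θ N ∈ S.image (substT θ) := Finset.mem_image_of_mem _ hN
  have hsub := h.map_csub θ
  rw [List.map_append, List.map_cons] at hsub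
  refine hsub.erase (fun σ _ => ?_) ?_
  · show SCR ((S.image (substT θ)).image (substT σ)) (substT σ (substT θ M))
    rw [hθ]
    exact SCR.id (Finset.mem_image_of_mem _ hθN)
  · show varsT (substT θ M) ⊆ varsS (S.image (substT θ))
    rw [hθ]
    exact varsT_subset_varsS hθN

theorem DCSystem.splitRight {T M N : MsgV} (h : DCSystem (C₁ ++ .rightc S T :: C₂))
    (hT : ∀ σ Γ, SCR Γ (substT σ M) → SCR Γ (substT σ N) → SCR Γ (substT σ T))
    (hvars : varsT T ⊆ varsT M ∪ varsT N) :
    DCSystem (C₁ ++ .rightc S M :: .rightc S N :: C₂) := by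
  have hins : DCSystem ((C₁ ++ [.rightc S M]) ++ .rightc S T :: C₂) := by
    simpa using h.insert_of_lhs_eq (e := .rightc S M) rfl
  have hrep := hins.replace (d' := .rightc S N)
    (fun σ hP hN => hT σ _ ((solution_append.1 hP).2.2 _ List.mem_cons_self) hN)
    (fun σ _ B hB => SC.id (Finset.mem_image_of_mem _ hB)) (fun B hB => SCR.id hB) rfl ?_
  · simpa using hrep
  · exact hvars.trans (Finset.union_subset_union
      (fun x hx => mem_varsL.2 ⟨.rightc S M, by simp, Finset.mem_union_left _ hx⟩)
      Finset.subset_union_left)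

theorem DCSystem.toRight {M : MsgV} (h : DCSystem (C₁ ++ .proper S M :: C₂)) :
    DCSystem (C₁ ++ .rightc S M :: C₂) :=
  h.replace (fun _ _ => SC.of_SCR) (fun _ _ _ hB => SC.id (Finset.mem_image_of_mem _ hB))
    (fun _ => SCR.id) rfl (Finset.subset_union_left.trans Finset.subset_union_right)

theorem image_insert_insert_subset (σ : ℕ → MsgV) (T M N : MsgV) :
    (insert M (insert N S)).image (substT σ) ⊆
      insert (substT σ M) (insert (substT σ N) ((insert T S).image (substT σ))) := by
  simp only [Finset.image_insert]
  exact Finset.insert_subset_insert _ (Finset.insert_subset_insert _ (Finset.subset_insert _ _))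

theorem varsS_insert_insert {T M N : MsgV} (hT : varsT T = varsT M ∪ varsT N) :
    varsS (insert M (insert N S)) = varsS (insert T S) := by
  rw [varsS_insert, varsS_insert, varsS_insert, hT, Finset.union_assoc]

theorem DCSystem.splitPairLeft {M N U : MsgV}
    (h : DCSystem (C₁ ++ .proper (insert (pair M N) S) U :: C₂)) :
    DCSystem (C₁ ++ .proper (insert M (insert N S)) U :: C₂) := by
  refine h.replace (fun σ _ hU => ?_) (fun σ _ B hB => ?_) (fun B hB => ?_)
    (varsS_insert_insert rfl) (Finset.subset_union_left.trans Finset.subset_union_right)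
  · exact SC.pL (Finset.mem_image_of_mem (substT σ) (Finset.mem_insert_self (pair M N) S))
      (hU.mono (image_insert_insert_subset σ _ M N))
  · have hpair : SC ((insert (pair M N) S).image (substT σ)) (pair (substT σ M) (substT σ N)) :=
      SC.id (Finset.mem_image_of_mem (substT σ) (Finset.mem_insert_self (pair M N) S))
    rcases Finset.mem_insert.1 hB with rfl | hB
    · exact hpair.pair_inv.1
    rcases Finset.mem_insert.1 hB with rfl | hB
    · exact hpair.pair_inv.2
    · exact SC.id (Finset.mem_image_of_mem _ (Finset.mem_insert_of_mem hB))
  · rcases Finset.mem_insert.1 hB with rfl | hB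
    · exact SCR.pR (SCR.id (Finset.mem_insert_self _ _))
        (SCR.id (Finset.mem_insert_of_mem (Finset.mem_insert_self _ _)))
    · exact SCR.id (Finset.mem_insert_of_mem (Finset.mem_insert_of_mem hB))

theorem DCSystem.decryptLeft {M N U : MsgV}
    (h : DCSystem (C₁ ++ .proper (insert (enc M N) S) U :: C₂)) :
    DCSystem (C₁ ++ .rightc (insert (enc M N) S) N :: .proper (insert M (insert N S)) U :: C₂) := by
  have hins : DCSystem ((C₁ ++ [.rightc (insert (enc M N) S) N]) ++
      .proper (insert (enc M N) S) U :: C₂) := by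
    simpa using h.insert_of_lhs_eq (e := .rightc (insert (enc M N) S) N) rfl
  have hkey : ∀ σ, Solution σ (C₁ ++ [.rightc (insert (enc M N) S) N]) →
      SC ((insert (enc M N) S).image (substT σ)) (substT σ N) := fun σ hP =>
    SC.of_SCR ((solution_append.1 hP).2.2 _ List.mem_cons_self)
  have hrep := hins.replace (d' := .proper (insert M (insert N S)) U)
    (fun σ hP hU => ?_) (fun σ hP B hB => ?_) (fun B hB => ?_) (varsS_insert_insert rfl)
    (Finset.subset_union_left.trans Finset.subset_union_right)
  · simpa using hrep
  · exact SC.eL (Finset.mem_image_of_mem (substT σ) (Finset.mem_insert_self (enc M N) S))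
      (hkey σ hP) (hU.mono (image_insert_insert_subset σ _ M N))
  · rcases Finset.mem_insert.1 hB with rfl | hB
    · exact (SC.id (Finset.mem_image_of_mem (substT σ) (Finset.mem_insert_self (enc B N) S))).dec
        (hkey σ hP)
    rcases Finset.mem_insert.1 hB with rfl | hB
    · exact hkey σ hP
    · exact SC.id (Finset.mem_image_of_mem _ (Finset.mem_insert_of_mem hB))
  · rcases Finset.mem_insert.1 hB with rfl | hB
    · exact SCR.eR (SCR.id (Finset.mem_insert_self _ _))
        (SCR.id (Finset.mem_insert_of_mem (Finset.mem_insert_self _ _)))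
    · exact SCR.id (Finset.mem_insert_of_mem (Finset.mem_insert_of_mem hB))

end Rules

/-- Constraint reduction preserves deducibility constraint systems. -/
theorem reduction_preserves_dcs (C : List Constraint) (θ : ℕ → MsgV)
    (C' : List Constraint) (hC : DCSystem C) (hred : Red C θ C') :
    DCSystem C' := by
  cases hred with
  | c1 _ hN hθ => exact hC.unify hN hθ.1
  | c2p => exact hC.splitRight (fun _ _ => SCR.pR) subset_rfl
  | c2e => exact hC.splitRight (fun _ _ => SCR.eR) subset_rfl
  | c3 => exact hC.toRight
  | c4 => exact hC.splitPairLeft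
  | c5 => exact hC.decryptLeft
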